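/- If a pattern p is k-avoidable in the ordinary sense, then p is 3k-avoidable up to ≃; consequently λ_≃(p) ≤ 3·λ_=(p) for every avoidable pattern p. -/

import Mathlib

/-- `x` is a (finite, contiguous) factor of the infinite word `w`. -/
def InfFactor {A : Type*} (x : List A) (w : ℕ → A) : Prop :=
  ∃ i : ℕ, x = (List.range x.length).map fun j => w (i + j)

/-- Reversal-equivalence of words: `x ≃ x'` iff `x' = x` or `x'` is the reversal of `x`. -/
def SimRev {A : Type*} (x x' : List A) : Prop := x' = x ∨ x' = x.reverse

/-- The infinite word `w` encounters the pattern `p` up to the relation `sim`: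
`w` has a factor `X₁X₂⋯Xₙ` with each `Xᵢ` nonempty and `sim Xᵢ Xⱼ` whenever `pᵢ = pⱼ`. -/
def Encounters {V A : Type*} (sim : List A → List A → Prop) (p : List V) (w : ℕ → A) : Prop :=
  ∃ X : List (List A), X.length = p.length ∧ (∀ x ∈ X, x ≠ []) ∧
    InfFactor X.flatten w ∧
    ∀ i j : ℕ, i < p.length → j < p.length → p[i]? = p[j]? →
      sim (X.getD i []) (X.getD j [])

/-! Write the position `i mod 3` next to every letter of a word `w` avoiding `p`, getting a word
over `3k` letters. Along any factor of the tagged word the tags cycle forward `0, 1, 2, 0, …`, and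
along a reversed factor they cycle backwards, so no factor of length at least two has its reversal
as a factor as well. Hence in the tagged word `X ≃ Y` between factors forces `X = Y`, and an
encounter of `p` up to `≃` erases its tags to an ordinary encounter of `p` in `w`. -/

theorem infFactor_iff_getElem {A : Type*} {x : List A} {w : ℕ → A} :
    InfFactor x w ↔ ∃ i, ∀ j (hj : j < x.length), x[j] = w (i + j) := by
  constructor
  · rintro ⟨i, hi⟩
    exact ⟨i, fun j hj => by rw [List.getElem_of_eq hi]; simp⟩
  · rintro ⟨i, hi⟩
    exact ⟨i, List.ext_getElem (by simp) fun j h _ => by simpa using hi j h⟩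

theorem InfFactor.map {A B : Type*} (f : A → B) {x : List A} {w : ℕ → A}
    (h : InfFactor x w) : InfFactor (x.map f) (f ∘ w) := by
  obtain ⟨i, hi⟩ := infFactor_iff_getElem.mp h
  exact infFactor_iff_getElem.mpr ⟨i, fun j hj => by simp [hi j (by simpa using hj)]⟩

theorem InfFactor.of_infix {A : Type*} {x y : List A} {w : ℕ → A}
    (hxy : x <:+: y) (h : InfFactor y w) : InfFactor x w := by
  obtain ⟨s, t, rfl⟩ := hxy
  obtain ⟨i, hi⟩ := infFactor_iff_getElem.mp h
  refine infFactor_iff_getElem.mpr ⟨i + s.length, fun j hj => ?_⟩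
  have := hi (s.length + j) (by simp; omega)
  rw [List.getElem_append_left (by simp; omega), List.getElem_append_right (by omega)] at this
  simpa [Nat.add_assoc, Nat.add_comm j] using this

theorem Encounters.imp {V A : Type*} {sim sim' : List A → List A → Prop} {p : List V}
    {w : ℕ → A} (h : ∀ x y, InfFactor x w → InfFactor y w → sim x y → sim' x y) :
    Encounters sim p w → Encounters sim' p w := by
  rintro ⟨X, hlen, hne, hfac, hsim⟩
  refine ⟨X, hlen, hne, hfac, fun i j hi hj hij => ?_⟩
  have factor : ∀ n < p.length, InfFactor (X.getD n []) w := fun n hn => by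
    rw [List.getD_eq_getElem _ _ (hlen ▸ hn)]
    exact hfac.of_infix (List.infix_of_mem_flatten (List.getElem_mem _))
  exact h _ _ (factor i hi) (factor j hj) (hsim i j hi hj hij)

theorem Encounters.map_eq {V A B : Type*} (f : A → B) {p : List V} {w : ℕ → A}
    (h : Encounters Eq p w) : Encounters Eq p (f ∘ w) := by
  obtain ⟨X, hlen, hne, hfac, hsim⟩ := h
  have getD_map : ∀ n, (X.map (List.map f)).getD n [] = (X.getD n []).map f :=
    fun _ => List.getD_map X [] (List.map f)
  refine ⟨X.map (List.map f), by simpa using hlen, ?_, ?_, fun i j hi hj hij => ?_⟩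
  · simpa using hne
  · simpa [List.map_flatten] using hfac.map f
  · rw [getD_map, getD_map, hsim i j hi hj hij]

theorem InfFactor.length_le_one_of_reverse {A : Type*} {w : ℕ → A} (f : A → ℕ)
    (hf : ∀ m, f (w m) = m % 3) {x : List A} (h : InfFactor x w)
    (hrev : InfFactor x.reverse w) : x.length ≤ 1 := by
  by_contra! hlen
  obtain ⟨a, ha⟩ := infFactor_iff_getElem.mp h
  obtain ⟨b, hb⟩ := infFactor_iff_getElem.mp hrev
  have last : w (a + (x.length - 1 - 0)) = w b := by
    rw [← ha _ (by omega), ← List.getElem_reverse]; exact hb 0 (by simp; omega)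
  have penultimate : w (a + (x.length - 1 - 1)) = w (b + 1) := by
    rw [← ha _ (by omega), ← List.getElem_reverse]; exact hb 1 (by simp; omega)
  have hlast := congrArg f last
  have hpenultimate := congrArg f penultimate
  rw [hf, hf] at hlast hpenultimate
  omega

theorem eq_of_simRev_of_infFactor {A : Type*} {w : ℕ → A} (f : A → ℕ)
    (hf : ∀ m, f (w m) = m % 3) {x y : List A} (hx : InfFactor x w) (hy : InfFactor y w)
    (hxy : SimRev x y) : x = y := by
  rcases hxy with rfl | rfl
  · rfl
  have := hx.length_le_one_of_reverse f hf hy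
  rcases x with _ | ⟨a, _ | ⟨b, t⟩⟩ <;> simp_all

section Tagging

variable {k : ℕ}

def tagMod3 (w : ℕ → Fin k) (i : ℕ) : Fin (3 * k) :=
  ⟨3 * w i + i % 3, by omega⟩

def untagMod3 (a : Fin (3 * k)) : Fin k :=
  ⟨a / 3, by omega⟩

theorem untagMod3_comp_tagMod3 (w : ℕ → Fin k) : untagMod3 ∘ tagMod3 w = w := by
  funext i
  ext
  simp only [Function.comp_apply, untagMod3, tagMod3]
  omega

theorem tagMod3_mod_three (w : ℕ → Fin k) (i : ℕ) : (tagMod3 w i : ℕ) % 3 = i % 3 := by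
  simp only [tagMod3]
  omega

theorem not_encounters_simRev_tagMod3 {V : Type*} {p : List V} {w : ℕ → Fin k}
    (hw : ¬ Encounters Eq p w) : ¬ Encounters SimRev p (tagMod3 w) := by
  intro h
  have hEq : Encounters Eq p (tagMod3 w) :=
    h.imp fun _ _ => eq_of_simRev_of_infFactor (fun a => a.val % 3) (tagMod3_mod_three w)
  exact hw (untagMod3_comp_tagMod3 w ▸ hEq.map_eq untagMod3)

end Tagging

theorem three_k_avoidable_upto_rev_general {V : Type*} (p : List V) :
    (∀ k : ℕ, (∃ w : ℕ → Fin k, ¬ Encounters Eq p w) →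
      ∃ w : ℕ → Fin (3 * k), ¬ Encounters SimRev p w) ∧
    ((∃ k : ℕ, ∃ w : ℕ → Fin k, ¬ Encounters Eq p w) →
      sInf {k : ℕ | ∃ w : ℕ → Fin k, ¬ Encounters SimRev p w} ≤
        3 * sInf {k : ℕ | ∃ w : ℕ → Fin k, ¬ Encounters Eq p w}) := by
  have triple : ∀ k : ℕ, (∃ w : ℕ → Fin k, ¬ Encounters Eq p w) →
      ∃ w : ℕ → Fin (3 * k), ¬ Encounters SimRev p w :=
    fun _ ⟨w, hw⟩ => ⟨tagMod3 w, not_encounters_simRev_tagMod3 hw⟩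
  exact ⟨triple, fun havoid => Nat.sInf_le (triple _ (Nat.sInf_mem havoid))⟩

/-- If a pattern `p` is `k`-avoidable in the ordinary sense then it is `3k`-avoidable
up to `≃`; consequently `λ_≃(p) ≤ 3 · λ_=(p)` for every avoidable pattern `p`
(the avoidability indices being the least such `k`, expressed via `sInf`). -/
theorem three_k_avoidable_upto_rev {V : Type*} (p : List V) (hp : p ≠ []) :
    (∀ k : ℕ, (∃ w : ℕ → Fin k, ¬ Encounters Eq p w) →
      ∃ w : ℕ → Fin (3 * k), ¬ Encounters SimRev p w) ∧
    ((∃ k : ℕ, ∃ w : ℕ → Fin k, ¬ Encounters Eq p w) →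
      sInf {k : ℕ | ∃ w : ℕ → Fin k, ¬ Encounters SimRev p w} ≤
        3 * sInf {k : ℕ | ∃ w : ℕ → Fin k, ¬ Encounters Eq p w}) :=
  three_k_avoidable_upto_rev_general p
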